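/- Let N be a normal subgroup of G. Set 𝔡 := y_G'·k[[t]] and 𝔡₁ := (y_G'/y_N')·k[[t]], both G-stable subgroups of k((t)) under the action x ↦ ρ(g)(x), and let 𝔡^N, 𝔡₁^N denote their N-fixed parts. Let c : N → 𝔡 be a 1-cocycle (c_{st} = c_s + ρ(s)(c_t)) whose class is G/N-invariant, i.e. for each g ∈ G there exists b_g ∈ 𝔡 with ρ(g)(c_{g^{-1}sg}) = c_s + ρ(s)(b_g) − b_g for all s ∈ N. Then: (i) there exists α ∈ 𝔡₁ with ρ(s)(α) − α = c_s for all s ∈ N; (ii) for any such α and any g ∈ G, ρ(g)(α) − α ∈ 𝔡₁^N + 𝔡; (iii) writing ρ(g)(α) − α = a_g + b_g with a_g ∈ 𝔡₁^N and b_g ∈ 𝔡, the coset a_g + 𝔡^N ∈ 𝔡₁^N/𝔡^N is independent of the chosen decomposition, depends only on the coset gN, and the map gN ↦ a_g + 𝔡^N is a 1-cocycle of G/N with values in 𝔡₁^N/𝔡^N (with the action induced by x ↦ ρ(g)(x)); moreover its cohomology class in H^1(G/N, 𝔡₁^N/𝔡^N) does not depend on the choice of α. -/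

import Mathlib

open PowerSeries

/-- the canonical embedding `k[[t]] → k((t))`. -/
noncomputable def toL {k : Type} [Field k] (x : PowerSeries k) : LaurentSeries k :=
  HahnSeries.ofPowerSeries ℤ k x

/-- `ord(x) ≥ n` for the `t`-adic valuation on `k((t))` (with `ord 0 = ∞`). -/
def ordGE {k : Type} [Field k] (x : LaurentSeries k) (n : ℤ) : Prop :=
  x = 0 ∨ n ≤ HahnSeries.order x

/-!
The trace element `u = y_N / (t · y_N')` of `k((t))` satisfies `∑_{s ∈ N} ρ(s)(u) = 1`: by the
chain rule `ρ(s)(y_N') = y_N' / f_s'`, so `ρ(s)(u) = (y_N / y_N') · (f_s' / f_s)`, and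
`∑ f_s' / f_s` is the logarithmic derivative `y_N' / y_N`. Automorphisms of `k[[t]]` send `t` to
`t` times a unit, so they preserve the `t`-adic order on `k((t))`, and `α = -∑_s ρ(s)(u) · c_s`
lies in `𝔡₁` and solves `ρ(s)(α) - α = c_s`. Everything else is formal: each difference in (ii)
and (iii) is, by the defining identities, a combination of the `b_g` (hence in `𝔡`) and of
`N`-invariant elements, and `ρ(g)` preserves `N`-invariants because `N` is normal.
-/

namespace PowerSeries

variable {R : Type*} [CommRing R]

theorem map_eq_subst_of_X_dvd (φ : R⟦X⟧ →ₐ[R] R⟦X⟧) (hX : X ∣ φ X) (x : R⟦X⟧) :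
    φ x = x.subst (φ X) := by
  have ha : HasSubst (φ X) := HasSubst.of_constantCoeff_zero' (X_dvd_iff.mp hX)
  have hpoly (p : Polynomial R) : φ p = (p : R⟦X⟧).subst (φ X) := by
    rw [subst_coe ha, Polynomial.aeval_algHom_apply, ← subst_coe HasSubst.X', X_subst]
  ext n
  obtain ⟨q, T, rfl⟩ : ∃ (q : R⟦X⟧) (T : Polynomial R), x = X ^ (n + 1) * q + (T : R⟦X⟧) :=
    ⟨_, _, eq_X_pow_mul_shift_add_trunc (n + 1) x⟩
  have htail : X ^ (n + 1) ∣ φ (X ^ (n + 1) * q) - (X ^ (n + 1) * q).subst (φ X) := by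
    rw [map_mul, map_pow, subst_mul ha, subst_pow ha, subst_X ha, ← mul_sub]
    exact (pow_dvd_pow_of_dvd hX _).mul_right _
  have := X_pow_dvd_iff.mp htail n (Nat.lt_succ_self n)
  rw [map_add, subst_add ha, hpoly T, map_add, map_add]
  rw [map_sub] at this
  linear_combination this

theorem derivative_map (φ : R⟦X⟧ →ₐ[R] R⟦X⟧) (hX : X ∣ φ X) (x : R⟦X⟧) :
    derivative R (φ x) = φ (derivative R x) * derivative R (φ X) := by
  rw [map_eq_subst_of_X_dvd φ hX, map_eq_subst_of_X_dvd φ hX (derivative R x),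
    derivative_subst (HasSubst.of_constantCoeff_zero' (X_dvd_iff.mp hX))]

theorem X_dvd_map_X {k : Type*} [Field k] (φ : k⟦X⟧ ≃ₐ[k] k⟦X⟧) : X ∣ φ X := by
  rw [X_dvd_iff]
  by_contra h
  have hX := (MulEquiv.isUnit_map φ.toMulEquiv).mp (isUnit_iff_constantCoeff.mpr (Ne.isUnit h))
  simpa using isUnit_iff_constantCoeff.mp hX

theorem associated_X_map_X {k : Type*} [Field k] (φ : k⟦X⟧ ≃ₐ[k] k⟦X⟧) : Associated X (φ X) :=
  associated_of_dvd_dvd (X_dvd_map_X φ) (by simpa using map_dvd φ (X_dvd_map_X φ.symm))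

end PowerSeries

theorem Derivation.leibniz_prod {ι R A : Type*} [CommSemiring R] [CommSemiring A] [Algebra R A]
    [DecidableEq ι] (D : Derivation R A A) (s : Finset ι) (f : ι → A) :
    D (∏ i ∈ s, f i) = ∑ i ∈ s, (∏ j ∈ s.erase i, f j) * D (f i) := by
  induction s using Finset.induction_on with
  | empty => simp
  | insert a s ha ih =>
    rw [Finset.prod_insert ha, D.leibniz, ih, Finset.sum_insert ha, Finset.erase_insert ha,
      smul_eq_mul, smul_eq_mul, Finset.mul_sum, add_comm]
    congr 1
    refine Finset.sum_congr rfl fun i hi => ?_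
    rw [Finset.erase_insert_of_ne (by rintro rfl; exact ha hi), Finset.prod_insert (by simp [ha])]
    ring

theorem map_prod_map_eq {H R A : Type*} [Group H] [Fintype H] [CommSemiring R]
    [CommSemiring A] [Algebra R A] (σ : H →* (A ≃ₐ[R] A)) (x : A) (h : H) :
    σ h (∏ s, σ s x) = ∏ s, σ s x := by
  simp_rw [map_prod, ← AlgEquiv.mul_apply, ← map_mul]
  exact Equiv.prod_comp (Equiv.mulLeft h) (fun s => σ s x)

theorem cocycle_eq_coboundary_of_sum_map_eq_one {H R A : Type*} [Group H] [Fintype H]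
    [CommSemiring R] [Ring A] [Algebra R A] (σ : H →* (A ≃ₐ[R] A)) {u : A}
    (hu : ∑ s, σ s u = 1) {c : H → A} (hc : ∀ s t, c (s * t) = c s + σ s (c t)) (t : H) :
    σ t (-∑ s, σ s u * c s) - -∑ s, σ s u * c s = c t := by
  have hS : σ t (∑ s, σ s u * c s) = ∑ s, σ s u * c s - c t := calc
    σ t (∑ s, σ s u * c s) = ∑ s, σ (t * s) u * (c (t * s) - c t) := by
      simp [map_sum, map_mul, hc, AlgEquiv.mul_apply]
    _ = ∑ s, σ s u * (c s - c t) := Equiv.sum_comp (Equiv.mulLeft t) (fun s => σ s u * (c s - c t))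
    _ = ∑ s, σ s u * c s - c t := by simp [mul_sub, Finset.sum_sub_distrib, ← Finset.sum_mul, hu]
  rw [map_neg, hS]
  abel

section LaurentSeries

open HahnSeries

variable {k : Type} [Field k]

@[simp] theorem toL_mul (x y : k⟦X⟧) : toL (x * y) = toL x * toL y := map_mul _ x y

theorem toL_eq_zero_iff {x : k⟦X⟧} : toL x = 0 ↔ x = 0 :=
  map_eq_zero_iff _ ofPowerSeries_injective

theorem toL_sum {ι : Type*} (s : Finset ι) (f : ι → k⟦X⟧) :
    toL (∑ i ∈ s, f i) = ∑ i ∈ s, toL (f i) :=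
  map_sum _ f s

theorem toL_X : toL (X : k⟦X⟧) = single 1 1 := ofPowerSeries_X

theorem toL_units_zpow (u : k⟦X⟧ˣ) (n : ℤ) : toL (u : k⟦X⟧) ^ n = toL ↑(u ^ n) := by
  have := congrArg Units.val
    (map_zpow (Units.map (ofPowerSeries ℤ k : k⟦X⟧ →* LaurentSeries k)) u n)
  rw [Units.val_zpow_eq_zpow_val, Units.coe_map, Units.coe_map] at this
  exact this.symm

theorem ordGE_iff_le_orderTop {x : LaurentSeries k} {n : ℤ} :
    ordGE x n ↔ (n : WithTop ℤ) ≤ x.orderTop := by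
  obtain rfl | hx := eq_or_ne x 0
  · simp [ordGE]
  · rw [ordGE, ← order_eq_orderTop_of_ne_zero hx, WithTop.coe_le_coe]
    simp [hx]

theorem ordGE_mul {x y : LaurentSeries k} {m n : ℤ} (hx : ordGE x m) (hy : ordGE y n) :
    ordGE (x * y) (m + n) := by
  rw [ordGE_iff_le_orderTop] at *
  rw [orderTop_mul, WithTop.coe_add]
  exact add_le_add hx hy

theorem ordGE_single (n : ℤ) : ordGE (single n (1 : k)) n :=
  ordGE_iff_le_orderTop.mpr orderTop_single_le

theorem ordGE_toL (x : k⟦X⟧) : ordGE (toL x) 0 := by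
  rw [ordGE_iff_le_orderTop, toL, ofPowerSeries_apply, orderTop_embDomain]
  cases (toPowerSeries.symm x).orderTop <;> simp

theorem ordGE_iff_exists_eq_single_mul {f : LaurentSeries k} {n : ℤ} :
    ordGE f n ↔ ∃ x : k⟦X⟧, f = single n 1 * toL x := by
  constructor
  · rintro (rfl | hn)
    · exact ⟨0, by simp [toL]⟩
    obtain ⟨m, hm⟩ := Int.eq_ofNat_of_zero_le (sub_nonneg.mpr hn)
    refine ⟨X ^ m * f.powerSeriesPart, ?_⟩
    rw [toL, map_mul, ofPowerSeries_X_pow, ← mul_assoc, single_mul_single, ← hm, one_mul,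
      add_sub_cancel, LaurentSeries.single_order_mul_powerSeriesPart]
  · rintro ⟨x, rfl⟩
    simpa using ordGE_mul (ordGE_single n) (ordGE_toL x)

def ordGEAddSubgroup (k : Type) [Field k] (n : ℤ) : AddSubgroup (LaurentSeries k) where
  carrier := {x | ordGE x n}
  add_mem' {x y} hx hy := by
    simp only [Set.mem_ofPred_eq, ordGE_iff_le_orderTop] at *
    exact (le_min hx hy).trans min_orderTop_le_orderTop_add
  zero_mem' := Or.inl rfl
  neg_mem' := by simp [ordGE_iff_le_orderTop, orderTop_neg]

theorem ordGEAddSubgroup_mono {m n : ℤ} (h : m ≤ n) :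
    ordGEAddSubgroup k n ≤ ordGEAddSubgroup k m :=
  fun _ hx => hx.imp id h.trans

theorem ordGE_map (φ : k⟦X⟧ ≃ₐ[k] k⟦X⟧) (ψ : LaurentSeries k ≃ₐ[k] LaurentSeries k)
    (hψ : ∀ x, ψ (toL x) = toL (φ x)) {f : LaurentSeries k} {n : ℤ} (hf : ordGE f n) :
    ordGE (ψ f) n := by
  obtain ⟨x, rfl⟩ := ordGE_iff_exists_eq_single_mul.mp hf
  obtain ⟨u, hu⟩ := associated_X_map_X φ
  have hψt : ψ (single 1 1) = single 1 1 * toL u := by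
    rw [← toL_X, hψ, ← hu, toL_mul, toL_X]
  rw [map_mul, RatFunc.single_zpow, map_zpow₀, hψt, mul_zpow, ← RatFunc.single_zpow, hψ,
    toL_units_zpow, mul_assoc, ← toL_mul]
  exact ordGE_iff_exists_eq_single_mul.mpr ⟨_, rfl⟩

theorem ordGE_div_of_order_eq (a : k⟦X⟧) {z : k⟦X⟧} {d : ℕ} (hz : z.order = d) :
    ordGE (toL a / toL z) (-d) := by
  have hz0 : z ≠ 0 := by rintro rfl; simp at hz
  obtain ⟨w, hw⟩ : IsUnit z.divXPowOrder := by
    rw [isUnit_iff_constantCoeff, isUnit_iff_ne_zero, Ne, constantCoeff_divXPowOrder_eq_zero_iff]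
    exact hz0
  have hzw : toL z = single (d : ℤ) 1 * toL w := by
    rw [← X_pow_order_mul_divXPowOrder (f := z), hz, ENat.toNat_natCast, toL_mul, ← hw, toL,
      ofPowerSeries_X_pow, toL]
  refine ordGE_iff_exists_eq_single_mul.mpr ⟨a * ↑w⁻¹, ?_⟩
  have hw' : toL (w : k⟦X⟧) * toL ↑w⁻¹ = 1 := by rw [← toL_mul, Units.mul_inv]; exact map_one _
  have hs : single (-(d : ℤ)) (1 : k) * single (d : ℤ) 1 = 1 := by
    rw [single_mul_single, neg_add_cancel, mul_one]; rfl
  rw [hzw, toL_mul, div_eq_iff (by simp [← hzw, toL_eq_zero_iff, hz0])]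
  calc toL a = toL a * (toL ↑w * toL ↑w⁻¹) * (single (-(d : ℤ)) 1 * single (d : ℤ) 1) := by
        rw [hw', hs, mul_one, mul_one]
    _ = _ := by ring

section Trace

variable {H : Type*} [Group H] [Fintype H] (σ : H →* (k⟦X⟧ ≃ₐ[k] k⟦X⟧))
  (σL : H →* (LaurentSeries k ≃ₐ[k] LaurentSeries k)) (hσ : ∀ s x, σL s (toL x) = toL (σ s x))
  {y : k⟦X⟧} (hy : y = ∏ s, σ s X)
include hσ hy

theorem sum_map_div_eq_one (hy' : derivative k y ≠ 0) :
    ∑ s, σL s (toL y / (toL X * toL (derivative k y))) = 1 := by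
  classical
  have hfix (s : H) : σ s y = y := hy ▸ map_prod_map_eq σ X s
  have hchain (s : H) : derivative k y = σ s (derivative k y) * derivative k (σ s X) := by
    conv_lhs => rw [← hfix s]
    exact derivative_map (σ s).toAlgHom (X_dvd_map_X _) y
  have hterm (s : H) : σL s (toL y / (toL X * toL (derivative k y))) =
      toL ((∏ r ∈ Finset.univ.erase s, σ r X) * derivative k (σ s X)) / toL (derivative k y) := by
    have hfs : toL (σ s X) ≠ 0 := by simp [toL_eq_zero_iff]
    have hds : toL (derivative k (σ s X)) ≠ 0 := by
      intro h; apply hy'; rw [hchain s, toL_eq_zero_iff.mp h, mul_zero]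
    have hD : toL (derivative k y) = toL (σ s (derivative k y)) * toL (derivative k (σ s X)) := by
      rw [← toL_mul, ← hchain s]
    have hY : toL y = toL (∏ r ∈ Finset.univ.erase s, σ r X) * toL (σ s X) := by
      rw [← toL_mul, Finset.prod_erase_mul _ _ (Finset.mem_univ s), hy]
    rw [map_div₀, map_mul, hσ, hσ, hσ, hfix, hD, hY, toL_mul]
    field_simp
  rw [Finset.sum_congr rfl fun s _ => hterm s, ← Finset.sum_div, ← toL_sum,
    ← Derivation.leibniz_prod, ← hy, div_self (by simpa [toL_eq_zero_iff] using hy')]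

theorem exists_ordGE_sum_map_eq_one {d : ℕ} (hd : (derivative k y).order = d) :
    ∃ u, ordGE u (-d) ∧ ∑ s, σL s u = 1 := by
  have hy' : derivative k y ≠ 0 := by rintro h; simp [h] at hd
  obtain ⟨a, rfl⟩ : X ∣ y :=
    hy ▸ (X_dvd_map_X (σ 1)).trans (Finset.dvd_prod_of_mem _ (Finset.mem_univ 1))
  refine ⟨_, ?_, sum_map_div_eq_one σ σL hσ hy hy'⟩
  rw [toL_mul, mul_div_mul_left _ _ (by simp [toL_eq_zero_iff, X_ne_zero])]
  exact ordGE_div_of_order_eq a hd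

end Trace

end LaurentSeries

section Invariants

variable {R A G : Type*} [CommSemiring R] [Ring A] [Algebra R A] [Group G]
  (ρ : G →* (A ≃ₐ[R] A)) (N : Subgroup G)

def fixedAddSubgroup : AddSubgroup A where
  carrier := {x | ∀ s ∈ N, ρ s x = x}
  add_mem' hx hy s hs := by simp [hx s hs, hy s hs]
  zero_mem' _ _ := map_zero _
  neg_mem' hx s hs := by simp [hx s hs]

variable {ρ N}

theorem map_mul_apply (g h : G) (x : A) : ρ (g * h) x = ρ g (ρ h x) := by
  rw [map_mul, AlgEquiv.mul_apply]

theorem map_apply_conj (g s : G) (x : A) : ρ s (ρ g x) = ρ g (ρ (g⁻¹ * s * g) x) := by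
  rw [← map_mul_apply, ← map_mul_apply]
  group

theorem map_mem_fixedAddSubgroup (hN : N.Normal) (g : G) {x : A}
    (hx : x ∈ fixedAddSubgroup ρ N) : ρ g x ∈ fixedAddSubgroup ρ N := fun s hs => by
  rw [map_apply_conj, hx _ (hN.conj_mem' s hs g)]

variable {D D₁ : AddSubgroup A} {c : G → A} {α : A}

theorem sub_sub_mem_inf_fixedAddSubgroup (hN : N.Normal) (hD₁ : ∀ g, ∀ x ∈ D₁, ρ g x ∈ D₁)
    (hDD₁ : D ≤ D₁) (hα : α ∈ D₁) (hαc : ∀ s ∈ N, ρ s α - α = c s) {g : G} {b : A} (hb : b ∈ D)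
    (hbc : ∀ s ∈ N, ρ g (c (g⁻¹ * s * g)) = c s + ρ s b - b) :
    ρ g α - α - b ∈ D₁ ⊓ fixedAddSubgroup ρ N := by
  refine AddSubgroup.mem_inf.mpr ⟨sub_mem (sub_mem (hD₁ g α hα) hα) (hDD₁ hb), fun s hs => ?_⟩
  have hconj : ρ (g⁻¹ * s * g) α = α + c (g⁻¹ * s * g) := by
    rw [← hαc _ (hN.conj_mem' s hs g)]; abel
  rw [map_sub, map_sub, map_apply_conj, hconj, map_add, hbc s hs, ← hαc s hs]
  abel

theorem sub_mem_fixedAddSubgroup_of_map_sub_self_eq {α' : A} (hαc : ∀ s ∈ N, ρ s α - α = c s)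
    (hα'c : ∀ s ∈ N, ρ s α' - α' = c s) : α' - α ∈ fixedAddSubgroup ρ N := fun s hs => by
  linear_combination (norm := skip) hα'c s hs - hαc s hs
  rw [map_sub]
  abel

variable {a b : G → A} (ha : ∀ g, a g ∈ fixedAddSubgroup ρ N) (hb : ∀ g, b g ∈ D)
  (hab : ∀ g, ρ g α - α = a g + b g)
include ha hb hab

theorem sub_mem_inf_fixedAddSubgroup (g : G) {a' b' : A} (ha' : a' ∈ fixedAddSubgroup ρ N)
    (hb' : b' ∈ D) (hab' : ρ g α - α = a' + b') : a g - a' ∈ D ⊓ fixedAddSubgroup ρ N := by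
  have e : a g - a' = b' - b g := by linear_combination (norm := abel) hab' - hab g
  exact AddSubgroup.mem_inf.mpr ⟨e ▸ sub_mem hb' (hb g), sub_mem (ha g) ha'⟩

theorem mul_sub_mem_inf_fixedAddSubgroup (hD : ∀ g, ∀ x ∈ D, ρ g x ∈ D)
    (hαc : ∀ s ∈ N, ρ s α - α = c s) (hc : ∀ s ∈ N, c s ∈ D) (g : G) {n : G} (hn : n ∈ N) :
    a (g * n) - a g ∈ D ⊓ fixedAddSubgroup ρ N := by
  have e : a (g * n) - a g = ρ g (c n) + b g - b (g * n) := by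
    have := congrArg (ρ g) (hαc n hn)
    rw [map_sub, ← map_mul_apply] at this
    linear_combination (norm := abel) this + hab g - hab (g * n)
  exact AddSubgroup.mem_inf.mpr ⟨e ▸ sub_mem (add_mem (hD g _ (hc n hn)) (hb g)) (hb (g * n)),
    sub_mem (ha (g * n)) (ha g)⟩

theorem sub_sub_map_mem_inf_fixedAddSubgroup (hN : N.Normal) (hD : ∀ g, ∀ x ∈ D, ρ g x ∈ D)
    (g h : G) : a (g * h) - a g - ρ g (a h) ∈ D ⊓ fixedAddSubgroup ρ N := by
  have e : a (g * h) - a g - ρ g (a h) = b g + ρ g (b h) - b (g * h) := by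
    have := congrArg (ρ g) (hab h)
    rw [map_sub, ← map_mul_apply, map_add] at this
    linear_combination (norm := abel) this + hab g - hab (g * h)
  exact AddSubgroup.mem_inf.mpr ⟨e ▸ sub_mem (add_mem (hb g) (hD g _ (hb h))) (hb (g * h)),
    sub_mem (sub_mem (ha (g * h)) (ha g)) (map_mem_fixedAddSubgroup hN g (ha h))⟩

variable {α' : A} {a' b' : G → A} (ha' : ∀ g, a' g ∈ fixedAddSubgroup ρ N) (hb' : ∀ g, b' g ∈ D)
  (hab' : ∀ g, ρ g α' - α' = a' g + b' g)
include ha' hb' hab'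

theorem sub_sub_coboundary_mem_inf_fixedAddSubgroup (hN : N.Normal)
    (hαc : ∀ s ∈ N, ρ s α - α = c s) (hα'c : ∀ s ∈ N, ρ s α' - α' = c s) (g : G) :
    a' g - a g - (ρ g (α' - α) - (α' - α)) ∈ D ⊓ fixedAddSubgroup ρ N := by
  have e : a' g - a g - (ρ g (α' - α) - (α' - α)) = b g - b' g := by
    rw [map_sub]
    linear_combination (norm := abel) hab g - hab' g
  have hw := sub_mem_fixedAddSubgroup_of_map_sub_self_eq hαc hα'c
  exact AddSubgroup.mem_inf.mpr ⟨e ▸ sub_mem (hb g) (hb' g),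
    sub_mem (sub_mem (ha' g) (ha g)) (sub_mem (map_mem_fixedAddSubgroup hN g hw) hw)⟩

end Invariants

theorem statement15_general
    (k : Type) [Field k]
    (G : Type) [Group G] [Fintype G]
    (ρ : G →* (PowerSeries k ≃ₐ[k] PowerSeries k))
    (ρL : G →* (LaurentSeries k ≃ₐ[k] LaurentSeries k))
    (hρL : ∀ g x, ρL g (toL x) = toL (ρ g x))
    (N : Subgroup G) (hN : N.Normal) [DecidablePred (· ∈ N)]
    (yN : PowerSeries k)
    (hyN : yN = ∏ s ∈ Finset.univ.filter (· ∈ N), ρ s PowerSeries.X)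
    (dG dN : ℕ)
    (hdN : (PowerSeries.derivative k yN).order = (dN : ℕ∞))
    -- `c` is a 1-cocycle on `N` with values in `𝔡` …
    (c : G → LaurentSeries k)
    (hcval : ∀ s ∈ N, ordGE (c s) (dG : ℤ))
    (hccoc : ∀ s ∈ N, ∀ t ∈ N, c (s * t) = c s + ρL s (c t))
    -- … whose cohomology class is `G/N`-invariant
    (hinv : ∀ g : G, ∃ b : LaurentSeries k, ordGE b (dG : ℤ) ∧
      ∀ s ∈ N, ρL g (c (g⁻¹ * s * g)) = c s + ρL s b - b) :
    -- (i)
    (∃ α : LaurentSeries k, ordGE α ((dG : ℤ) - (dN : ℤ)) ∧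
      ∀ s ∈ N, ρL s α - α = c s) ∧
    -- (ii)
    (∀ α : LaurentSeries k, ordGE α ((dG : ℤ) - (dN : ℤ)) → (∀ s ∈ N, ρL s α - α = c s) →
      ∀ g : G, ∃ a b : LaurentSeries k,
        (ordGE a ((dG : ℤ) - (dN : ℤ)) ∧ ∀ s ∈ N, ρL s a = a) ∧
        ordGE b (dG : ℤ) ∧
        ρL g α - α = a + b) ∧
    -- (iii)
    (∀ (α : LaurentSeries k) (a b : G → LaurentSeries k),
      ordGE α ((dG : ℤ) - (dN : ℤ)) → (∀ s ∈ N, ρL s α - α = c s) →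
      (∀ g, ordGE (a g) ((dG : ℤ) - (dN : ℤ)) ∧ (∀ s ∈ N, ρL s (a g) = a g) ∧
        ordGE (b g) (dG : ℤ) ∧ ρL g α - α = a g + b g) →
      -- independence of the decomposition
      (∀ (g : G) (a' b' : LaurentSeries k),
        ordGE a' ((dG : ℤ) - (dN : ℤ)) → (∀ s ∈ N, ρL s a' = a') → ordGE b' (dG : ℤ) →
        ρL g α - α = a' + b' →
        ordGE (a g - a') (dG : ℤ) ∧ ∀ s ∈ N, ρL s (a g - a') = a g - a') ∧
      -- dependence only on the coset `gN`
      (∀ (g : G), ∀ n ∈ N,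
        ordGE (a (g * n) - a g) (dG : ℤ) ∧
        ∀ s ∈ N, ρL s (a (g * n) - a g) = a (g * n) - a g) ∧
      -- `gN ↦ a_g mod 𝔡^N` is a 1-cocycle of `G/N` with values in `𝔡₁^N/𝔡^N`
      (∀ g h : G,
        ordGE (a (g * h) - a g - ρL g (a h)) (dG : ℤ) ∧
        ∀ s ∈ N, ρL s (a (g * h) - a g - ρL g (a h)) = a (g * h) - a g - ρL g (a h)) ∧
      -- its cohomology class does not depend on the choice of `α`
      (∀ (α' : LaurentSeries k) (a' b' : G → LaurentSeries k),
        ordGE α' ((dG : ℤ) - (dN : ℤ)) → (∀ s ∈ N, ρL s α' - α' = c s) →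
        (∀ g, ordGE (a' g) ((dG : ℤ) - (dN : ℤ)) ∧ (∀ s ∈ N, ρL s (a' g) = a' g) ∧
          ordGE (b' g) (dG : ℤ) ∧ ρL g α' - α' = a' g + b' g) →
        ∃ w : LaurentSeries k,
          ordGE w ((dG : ℤ) - (dN : ℤ)) ∧ (∀ s ∈ N, ρL s w = w) ∧
          ∀ g : G,
            ordGE (a' g - a g - (ρL g w - w)) (dG : ℤ) ∧
            ∀ s ∈ N, ρL s (a' g - a g - (ρL g w - w)) =
              a' g - a g - (ρL g w - w))) := by
  have hD {n : ℤ} (g : G) : ∀ x ∈ ordGEAddSubgroup k n, ρL g x ∈ ordGEAddSubgroup k n :=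
    fun _ hx => ordGE_map (ρ g) (ρL g) (hρL g) hx
  have hDD₁ : ordGEAddSubgroup k dG ≤ ordGEAddSubgroup k (dG - dN) :=
    ordGEAddSubgroup_mono (by omega)
  have hyN' : yN = ∏ s : N, (ρ.comp N.subtype) s X := by
    rw [hyN, Finset.prod_subtype (p := (· ∈ N)) _ (by simp)]
    rfl
  obtain ⟨u, hu, hsum⟩ := exists_ordGE_sum_map_eq_one (ρ.comp N.subtype) (ρL.comp N.subtype)
    (fun s => hρL s) hyN' hdN
  refine ⟨⟨-∑ s : N, ρL s u * c s, ?_, fun t ht => ?_⟩, fun α hα hαc g => ?_,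
    fun α a b hα hαc hdec => ?_⟩
  · show _ ∈ ordGEAddSubgroup k _
    refine neg_mem (sum_mem fun s _ => ?_)
    have := ordGE_mul (ordGE_map (ρ s) (ρL s) (hρL s) hu) (hcval s s.2)
    rwa [neg_add_eq_sub] at this
  · exact cocycle_eq_coboundary_of_sum_map_eq_one (ρL.comp N.subtype) hsum
      (c := fun s => c s) (fun s t => hccoc s s.2 t t.2) ⟨t, ht⟩
  · obtain ⟨b, hb, hbc⟩ := hinv g
    exact ⟨_, b, sub_sub_mem_inf_fixedAddSubgroup hN hD hDD₁ hα hαc hb hbc, hb, by abel⟩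
  have ha (g : G) : a g ∈ fixedAddSubgroup ρL N := (hdec g).2.1
  have hb (g : G) : b g ∈ ordGEAddSubgroup k dG := (hdec g).2.2.1
  have hab g := (hdec g).2.2.2
  refine ⟨fun g a' b' _ ha' hb' hab' => sub_mem_inf_fixedAddSubgroup ha hb hab g ha' hb' hab',
    fun g n hn => mul_sub_mem_inf_fixedAddSubgroup ha hb hab hD hαc hcval g hn,
    sub_sub_map_mem_inf_fixedAddSubgroup ha hb hab hN hD,
    fun α' a' b' hα' hα'c hab' => ⟨α' - α, (sub_mem hα' hα : α' - α ∈ ordGEAddSubgroup k _),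
      sub_mem_fixedAddSubgroup_of_map_sub_self_eq hαc hα'c, fun g =>
      sub_sub_coboundary_mem_inf_fixedAddSubgroup ha hb hab (D := ordGEAddSubgroup k dG)
        (fun g => (hab' g).2.1) (fun g => (hab' g).2.2.1) (fun g => (hab' g).2.2.2) hN hαc hα'c g⟩⟩

/-- Let `𝔡 = y_G'·k[[t]] = {x : ord x ≥ d_G}` and
`𝔡₁ = (y_G'/y_N')·k[[t]] = {x : ord x ≥ d_G − d_N}`.  Let `c : N → 𝔡` be a `1`-cocycle
whose class is `G/N`-invariant.  Then (i) there is `α ∈ 𝔡₁` with `ρ(s)(α) − α = c_s`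
for `s ∈ N`; (ii) for any such `α` and any `g ∈ G`, `ρ(g)(α) − α ∈ 𝔡₁^N + 𝔡`;
(iii) in a decomposition `ρ(g)(α) − α = a_g + b_g` with `a_g ∈ 𝔡₁^N`, `b_g ∈ 𝔡`, the
class of `a_g` mod `𝔡^N` is well defined, depends only on `gN`, defines a `1`-cocycle
of `G/N` with values in `𝔡₁^N/𝔡^N`, and its cohomology class is independent of `α`. -/
theorem statement15
    (p : ℕ) [Fact p.Prime]
    (k : Type) [Field k] [CharP k p] [PerfectField k]
    (G : Type) [Group G] [Fintype G]
    (ρ : G →* (PowerSeries k ≃ₐ[k] PowerSeries k)) (hρ : Function.Injective ρ)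
    (ρL : G →* (LaurentSeries k ≃ₐ[k] LaurentSeries k))
    (hρL : ∀ g x, ρL g (toL x) = toL (ρ g x))
    (N : Subgroup G) (hN : N.Normal) [DecidablePred (· ∈ N)]
    (yN yG : PowerSeries k)
    (hyN : yN = ∏ s ∈ Finset.univ.filter (· ∈ N), ρ s PowerSeries.X)
    (hyG : yG = ∏ g : G, ρ g PowerSeries.X)
    (dG dN : ℕ)
    (hdG : (PowerSeries.derivative k yG).order = (dG : ℕ∞))
    (hdN : (PowerSeries.derivative k yN).order = (dN : ℕ∞))
    -- `c` is a 1-cocycle on `N` with values in `𝔡` …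
    (c : G → LaurentSeries k)
    (hcval : ∀ s ∈ N, ordGE (c s) (dG : ℤ))
    (hccoc : ∀ s ∈ N, ∀ t ∈ N, c (s * t) = c s + ρL s (c t))
    -- … whose cohomology class is `G/N`-invariant
    (hinv : ∀ g : G, ∃ b : LaurentSeries k, ordGE b (dG : ℤ) ∧
      ∀ s ∈ N, ρL g (c (g⁻¹ * s * g)) = c s + ρL s b - b) :
    -- (i)
    (∃ α : LaurentSeries k, ordGE α ((dG : ℤ) - (dN : ℤ)) ∧
      ∀ s ∈ N, ρL s α - α = c s) ∧
    -- (ii)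
    (∀ α : LaurentSeries k, ordGE α ((dG : ℤ) - (dN : ℤ)) → (∀ s ∈ N, ρL s α - α = c s) →
      ∀ g : G, ∃ a b : LaurentSeries k,
        (ordGE a ((dG : ℤ) - (dN : ℤ)) ∧ ∀ s ∈ N, ρL s a = a) ∧
        ordGE b (dG : ℤ) ∧
        ρL g α - α = a + b) ∧
    -- (iii)
    (∀ (α : LaurentSeries k) (a b : G → LaurentSeries k),
      ordGE α ((dG : ℤ) - (dN : ℤ)) → (∀ s ∈ N, ρL s α - α = c s) →
      (∀ g, ordGE (a g) ((dG : ℤ) - (dN : ℤ)) ∧ (∀ s ∈ N, ρL s (a g) = a g) ∧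
        ordGE (b g) (dG : ℤ) ∧ ρL g α - α = a g + b g) →
      -- independence of the decomposition
      (∀ (g : G) (a' b' : LaurentSeries k),
        ordGE a' ((dG : ℤ) - (dN : ℤ)) → (∀ s ∈ N, ρL s a' = a') → ordGE b' (dG : ℤ) →
        ρL g α - α = a' + b' →
        ordGE (a g - a') (dG : ℤ) ∧ ∀ s ∈ N, ρL s (a g - a') = a g - a') ∧
      -- dependence only on the coset `gN`
      (∀ (g : G), ∀ n ∈ N,
        ordGE (a (g * n) - a g) (dG : ℤ) ∧
        ∀ s ∈ N, ρL s (a (g * n) - a g) = a (g * n) - a g) ∧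
      -- `gN ↦ a_g mod 𝔡^N` is a 1-cocycle of `G/N` with values in `𝔡₁^N/𝔡^N`
      (∀ g h : G,
        ordGE (a (g * h) - a g - ρL g (a h)) (dG : ℤ) ∧
        ∀ s ∈ N, ρL s (a (g * h) - a g - ρL g (a h)) = a (g * h) - a g - ρL g (a h)) ∧
      -- its cohomology class does not depend on the choice of `α`
      (∀ (α' : LaurentSeries k) (a' b' : G → LaurentSeries k),
        ordGE α' ((dG : ℤ) - (dN : ℤ)) → (∀ s ∈ N, ρL s α' - α' = c s) →
        (∀ g, ordGE (a' g) ((dG : ℤ) - (dN : ℤ)) ∧ (∀ s ∈ N, ρL s (a' g) = a' g) ∧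
          ordGE (b' g) (dG : ℤ) ∧ ρL g α' - α' = a' g + b' g) →
        ∃ w : LaurentSeries k,
          ordGE w ((dG : ℤ) - (dN : ℤ)) ∧ (∀ s ∈ N, ρL s w = w) ∧
          ∀ g : G,
            ordGE (a' g - a g - (ρL g w - w)) (dG : ℤ) ∧
            ∀ s ∈ N, ρL s (a' g - a g - (ρL g w - w)) =
              a' g - a g - (ρL g w - w))) :=
  statement15_general k G ρ ρL hρL N hN yN hyN dG dN hdN c hcval hccoc hinv
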